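/- Let g(ρ, θ) = M_ε(θ)ρ - ρ = 0 be the constraint, where M_ε(θ) is a differentiable family of matrices and ρ(θ) is a differentiable family of probability vectors satisfying the constraint with ρ(θ)·𝟙 = 1. If λ solves the adjoint equation (M_εᵀ - I)λ = -(∂_ρ J)ᵀ + ((∂_ρ J)ᵀρ) 𝟙 and J(θ) = J(ρ(θ)), then for any direction of θ, d J/dθ = λᵀ (∂_θ M_ε) ρ + c · d(𝟙ᵀρ)/dθ for some constant c; in particular, since 𝟙ᵀρ(θ) ≡ 1, the total derivative of J equals λᵀ(∂_θ M_ε)ρ. -/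

import Mathlib

open Matrix Finset

/-!
Differentiating `M_ε ρ = ρ` gives `M'ρ = (I - M_ε)ρ'`, and differentiating `𝟙ᵀρ = 1` gives
`𝟙ᵀρ' = 0`. Moving `I - M_ε` onto `λ` by transposition and using the adjoint equation,
`λᵀM'ρ = ((I - M_εᵀ)λ)ᵀρ' = (∂_ρJ)ρ' - ((∂_ρJ)ρ)·𝟙ᵀρ' = (∂_ρJ)ρ'`, which is `dJ/dθ` by the
chain rule.
-/

theorem sum_eq_zero_of_hasDerivAt_of_sum_const {ι 𝕜 : Type*} [Fintype ι]
    [NontriviallyNormedField 𝕜] {ρ : 𝕜 → ι → 𝕜} {ρ' : ι → 𝕜} {x a : 𝕜}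
    (hconst : ∀ t, ∑ i, ρ t i = a) (hρ : HasDerivAt ρ ρ' x) : ∑ i, ρ' i = 0 := by
  have hsum := HasDerivAt.fun_sum fun i (_ : i ∈ univ) => hasDerivAt_pi.mp hρ i
  simp only [hconst] at hsum
  exact hsum.unique (hasDerivAt_const x a)

theorem hasDerivAt_mulVec {ι 𝕜 : Type*} [Fintype ι] [NontriviallyNormedField 𝕜]
    {M : 𝕜 → Matrix ι ι 𝕜} {M' : Matrix ι ι 𝕜} {v : 𝕜 → ι → 𝕜} {v' : ι → 𝕜} {x : 𝕜}
    (hM : ∀ i j, HasDerivAt (fun t => M t i j) (M' i j) x) (hv : HasDerivAt v v' x) :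
    HasDerivAt (fun t => M t *ᵥ v t) (M' *ᵥ v x + M x *ᵥ v') x := by
  refine hasDerivAt_pi.mpr fun i => ?_
  have hsum := HasDerivAt.fun_sum fun j (_ : j ∈ univ) => (hM i j).fun_mul (hasDerivAt_pi.mp hv j)
  simpa only [mulVec, dotProduct, Pi.add_apply, sum_add_distrib] using hsum

theorem LinearMap.apply_eq_dotProduct_single {ι R : Type*} [Fintype ι] [DecidableEq ι]
    [CommSemiring R] (f : (ι → R) →ₗ[R] R) (x : ι → R) :
    f x = (fun i => f (Pi.single i 1)) ⬝ᵥ x := by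
  conv_lhs => rw [pi_eq_sum_univ' x]
  simp only [map_sum, map_smul, smul_eq_mul, dotProduct, mul_comm]

theorem dotProduct_mulVec_eq_of_adjoint {ι R : Type*} [Fintype ι] [CommRing R]
    {M A : Matrix ι ι R} {lam g v w : ι → R} {c : R}
    (hadj : ∀ i, (Mᵀ *ᵥ lam) i - lam i = -g i + c) (hw : A *ᵥ v + M *ᵥ w = w)
    (hsum : ∑ i, w i = 0) :
    lam ⬝ᵥ A *ᵥ v = g ⬝ᵥ w := by
  have hres : lam - Mᵀ *ᵥ lam = g - c • 1 := by
    funext i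
    simp only [Pi.sub_apply, Pi.smul_apply, Pi.one_apply, smul_eq_mul, mul_one]
    linear_combination -hadj i
  calc lam ⬝ᵥ A *ᵥ v = lam ⬝ᵥ (w - M *ᵥ w) := by rw [eq_sub_of_add_eq hw]
    _ = (lam - Mᵀ *ᵥ lam) ⬝ᵥ w := by
      rw [dotProduct_sub, dotProduct_mulVec, ← mulVec_transpose, sub_dotProduct]
    _ = g ⬝ᵥ w := by
      rw [hres, sub_dotProduct, smul_dotProduct, one_dotProduct, hsum, smul_zero, sub_zero]

/-- Adjoint-state method for the eigenvector constraint `M_ε(θ)ρ(θ) = ρ(θ)`,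
`𝟙ᵀρ(θ) = 1`: if `λ` solves `(M_εᵀ - I)λ = -(∂_ρJ)ᵀ + ((∂_ρJ)ᵀρ)𝟙`, then
`dJ/dθ = λᵀ(∂_θM_ε)ρ + c·d(𝟙ᵀρ)/dθ` for some constant `c`, and in particular
(since `𝟙ᵀρ ≡ 1`) `dJ/dθ = λᵀ(∂_θM_ε)ρ`. -/
theorem adjoint_state_gradient
    (N : ℕ) (Mε : ℝ → Matrix (Fin N) (Fin N) ℝ) (ρ : ℝ → Fin N → ℝ)
    (θ₀ : ℝ)
    (hconstr : ∀ θ, (Mε θ).mulVec (ρ θ) = ρ θ)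
    (hnorm : ∀ θ, ∑ i, ρ θ i = 1)
    (M' : Matrix (Fin N) (Fin N) ℝ)
    (hM' : ∀ i j, HasDerivAt (fun θ => Mε θ i j) (M' i j) θ₀)
    (ρ' : Fin N → ℝ)
    (hρ' : ∀ i, HasDerivAt (fun θ => ρ θ i) (ρ' i) θ₀)
    (J : (Fin N → ℝ) → ℝ) (hJ : DifferentiableAt ℝ J (ρ θ₀))
    (g : Fin N → ℝ) (hg : ∀ i, g i = fderiv ℝ J (ρ θ₀) (Pi.single i 1))
    (lam : Fin N → ℝ)
    (hadj : ∀ i, (∑ j, Mε θ₀ j i * lam j) - lam i =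
      -(g i) + (∑ j, g j * ρ θ₀ j)) :
    (∃ c : ℝ, HasDerivAt (fun θ => J (ρ θ))
        (lam ⬝ᵥ (M'.mulVec (ρ θ₀)) + c * (∑ i, ρ' i)) θ₀) ∧
    HasDerivAt (fun θ => J (ρ θ)) (lam ⬝ᵥ (M'.mulVec (ρ θ₀))) θ₀ := by
  have hρ : HasDerivAt ρ ρ' θ₀ := hasDerivAt_pi.mpr hρ'
  have hmass : ∑ i, ρ' i = 0 := sum_eq_zero_of_hasDerivAt_of_sum_const hnorm hρ
  have hlin : M' *ᵥ ρ θ₀ + Mε θ₀ *ᵥ ρ' = ρ' := by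
    have h := hasDerivAt_mulVec hM' hρ
    simp only [hconstr] at h
    exact h.unique hρ
  have hgrad : fderiv ℝ J (ρ θ₀) ρ' = g ⬝ᵥ ρ' := by
    rw [funext hg]
    exact (fderiv ℝ J (ρ θ₀)).toLinearMap.apply_eq_dotProduct_single ρ'
  have hmain : HasDerivAt (fun θ => J (ρ θ)) (lam ⬝ᵥ M' *ᵥ ρ θ₀) θ₀ := by
    rw [dotProduct_mulVec_eq_of_adjoint hadj hlin hmass, ← hgrad]
    exact hJ.hasFDerivAt.comp_hasDerivAt θ₀ hρ
  exact ⟨⟨0, by simpa using hmain⟩, hmain⟩
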